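/- arXiv:2201.08769 — 3 statements merged into one kernel-verified Lean document; each statement's English description precedes it below -/
import Mathlib

section
/- The derivative of the one-parameter Mittag-Leffler function of −λt^α satisfies (d/dt) E_{α,1}(−λ t^α) = −λ t^{α−1} E_{α,α}(−λ t^α) for t > 0, λ ∈ ℝ, 0 < α. -/
open MeasureTheory Real Set Filter

/-- Mittag-Leffler function. -/
noncomputable def ML (α β z : ℝ) : ℝ :=
  ∑' k : ℕ, z ^ k / Real.Gamma (α * k + β)

/-!
By the chain rule it suffices that `d/dz E_{α,1}(z) = E_{α,α}(z) / α`. Termwise differentiation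
is justified because `Γ(αk + 1) ≥ ⌊αk⌋!` outgrows every geometric sequence, and the shifted
derivative series is `E_{α,α} / α` by `Γ(x + 1) = x Γ(x)`.
-/

open Nat Topology

lemma factorial_floor_le_Gamma_add_one {x : ℝ} (hx : 1 ≤ x) : (⌊x⌋₊ ! : ℝ) ≤ Gamma (x + 1) := by
  rw [← Gamma_nat_eq_factorial]
  refine Gamma_strictMonoOn_Ici.monotoneOn ?_ (by simp only [mem_Ici]; linarith) ?_
  · have : (1 : ℝ) ≤ ⌊x⌋₊ := by exact_mod_cast (Nat.one_le_floor_iff x).2 hx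
    simp only [mem_Ici]; linarith
  · linarith [Nat.floor_le (zero_le_one.trans hx)]

lemma eventually_pow_le_Gamma_mul_add_one {α : ℝ} (hα : 0 < α) (D : ℝ) :
    ∀ᶠ k : ℕ in atTop, D ^ k ≤ Gamma (α * k + 1) := by
  set E := max |D| 1 ^ α⁻¹
  have hE : 1 ≤ E := one_le_rpow (le_max_right _ _) (inv_nonneg.2 hα.le)
  have hfloor : Tendsto (fun k : ℕ => ⌊α * k⌋₊) atTop atTop :=
    tendsto_nat_floor_atTop.comp (tendsto_natCast_atTop_atTop.const_mul_atTop hα)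
  have hfac : ∀ᶠ m : ℕ in atTop, E ^ (m + 1) ≤ m ! := by
    have hlim : Tendsto (fun m : ℕ => E ^ (m + 1) / m !) atTop (𝓝 0) := by
      simpa only [div_mul_eq_mul_div, ← pow_succ, zero_mul] using
        (FloorSemiring.tendsto_pow_div_factorial_atTop E).mul_const E
    filter_upwards [hlim.eventually (ge_mem_nhds one_pos)] with m hm
    exact (div_le_one (by positivity)).1 hm
  filter_upwards [hfloor.eventually hfac, hfloor.eventually_ge_atTop 1] with k hk hk1
  calc D ^ k ≤ max |D| 1 ^ k := (le_abs_self _).trans <| (abs_pow D k).trans_le <|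
        pow_le_pow_left₀ (abs_nonneg D) (le_max_left _ _) k
    _ = E ^ (α * k) := by
        rw [← rpow_mul (zero_le_one.trans (le_max_right _ _)), inv_mul_cancel_left₀ hα.ne',
          rpow_natCast]
    _ ≤ E ^ ((⌊α * k⌋₊ + 1 : ℕ) : ℝ) :=
        rpow_le_rpow_of_exponent_le hE (by push_cast; exact (Nat.lt_floor_add_one _).le)
    _ = E ^ (⌊α * k⌋₊ + 1) := rpow_natCast _ _
    _ ≤ ⌊α * k⌋₊ ! := hk
    _ ≤ Gamma (α * k + 1) := factorial_floor_le_Gamma_add_one ((Nat.one_le_floor_iff _).1 hk1)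

lemma summable_pow_div_Gamma_mul_add_one {α : ℝ} (hα : 0 < α) (C : ℝ) :
    Summable fun k : ℕ => C ^ k / Gamma (α * k + 1) := by
  refine summable_geometric_two.of_norm_bounded_eventually ?_
  rw [Nat.cofinite_eq_atTop]
  filter_upwards [eventually_pow_le_Gamma_mul_add_one hα (2 * |C|)] with k hk
  have hΓ : 0 < Gamma (α * k + 1) := Gamma_pos_of_pos (by positivity)
  rw [norm_div, norm_pow, Real.norm_eq_abs, Real.norm_eq_abs, abs_of_pos hΓ,
    div_le_iff₀ hΓ]
  calc |C| ^ k = (1 / 2) ^ k * (2 * |C|) ^ k := by rw [← mul_pow]; ring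
    _ ≤ (1 / 2) ^ k * Gamma (α * k + 1) := by gcongr

lemma natCast_mul_pow_pred_le {R y : ℝ} (hR : 1 ≤ R) (hy : |y| ≤ R) (k : ℕ) :
    k * |y| ^ (k - 1) ≤ (2 * R) ^ k := by
  rw [mul_pow]
  gcongr
  · exact_mod_cast Nat.lt_two_pow_self.le
  · calc |y| ^ (k - 1) ≤ R ^ (k - 1) := by gcongr
      _ ≤ R ^ k := pow_le_pow_right₀ hR (Nat.sub_le k 1)

lemma hasDerivAt_ML_one {α : ℝ} (hα : 0 < α) (z : ℝ) :
    HasDerivAt (ML α 1) (α⁻¹ * ML α α z) z := by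
  set R := |z| + 1
  have hz : z ∈ Metric.ball (0 : ℝ) R := by simp [R]
  have hbound : ∀ (k : ℕ), ∀ y ∈ Metric.ball (0 : ℝ) R,
      ‖k * y ^ (k - 1) / Gamma (α * k + 1)‖ ≤ (2 * R) ^ k / Gamma (α * k + 1) := by
    intro k y hy
    have hΓ : 0 < Gamma (α * k + 1) := Gamma_pos_of_pos (by positivity)
    rw [norm_div, Real.norm_eq_abs, Real.norm_eq_abs, abs_of_pos hΓ, abs_mul, abs_pow,
      Nat.abs_cast]
    gcongr
    exact natCast_mul_pow_pred_le (by simp [R]) (by simpa using (Metric.mem_ball.1 hy).le) k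
  have hsum := summable_pow_div_Gamma_mul_add_one hα (2 * R)
  refine (hasDerivAt_tsum_of_isPreconnected hsum Metric.isOpen_ball
    (convex_ball 0 R).isPreconnected (fun k y _ => (hasDerivAt_pow k y).div_const _) hbound hz
    (summable_pow_div_Gamma_mul_add_one hα z) hz).congr_deriv ?_
  rw [(hsum.of_norm_bounded fun k => hbound k z hz).tsum_eq_zero_add, ML, ← tsum_mul_left]
  simp only [CharP.cast_eq_zero, zero_mul, zero_div, zero_add]
  refine tsum_congr fun k => ?_
  have hαk : α * k + α ≠ 0 := by positivity
  rw [Nat.add_sub_cancel, Nat.cast_succ, show α * (k + 1) + 1 = α * k + α + 1 by ring,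
    Gamma_add_one hαk]
  field_simp

theorem deriv_MittagLeffler
    (α lam : ℝ) (hα : 0 < α) :
    ∀ t : ℝ, 0 < t →
      deriv (fun r => ML α 1 (-lam * r ^ α)) t =
        -lam * t ^ (α - 1) * ML α α (-lam * t ^ α) := by
  intro t ht
  have hinner : HasDerivAt (fun r => -lam * r ^ α) (-lam * (α * t ^ (α - 1))) t :=
    (hasDerivAt_rpow_const (Or.inl ht.ne')).const_mul _
  refine ((hasDerivAt_ML_one hα _).comp t hinner).deriv.trans ?_
  field_simp
end

section
/- Uniqueness via generalized Gronwall: if 0 < α < 1, λ ∈ ℝ, and u ∈ L²(0,T) satisfies u(t) = −(λ/Γ(α)) ∫₀ᵗ (t−s)^{α−1} u(s) ds for almost all t ∈ (0,T), then u = 0 almost everywhere on (0,T). -/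
/-!
Extend `v` by zero outside `(0, T)`; the hypothesis then reads `v ≤ C (v ⋆ k)` for the Abel
kernel `k r = r ^ (α - 1)` on `r > 0`. Multiplication by the character `e^{-σx}` distributes
over convolution and the Laplace transform of `k` is `Γ(α) / σ ^ α`, so the weighted mass
`W = ∫ e^{-σx} v x dx`, which is finite because `v ∈ L¹`, satisfies `W ≤ C Γ(α) σ^{-α} W`.
For `σ` large this forces `W = 0`, hence `v = 0` a.e.
-/

open MeasureTheory Measure Real Set Filter Topology
open scoped ENNReal NNReal

theorem lintegral_lconvolution {G : Type*} [MeasurableSpace G] [AddGroup G] [MeasurableAdd₂ G]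
    [MeasurableNeg G] {μ : Measure G} [IsAddLeftInvariant μ] [SFinite μ] {f g : G → ℝ≥0∞}
    (hf : AEMeasurable f μ) (hg : AEMeasurable g μ) :
    ∫⁻ x, (f ⋆ₗ[μ] g) x ∂μ = (∫⁻ x, f x ∂μ) * ∫⁻ x, g x ∂μ := by
  simp only [lconvolution_def]
  rw [lintegral_lintegral_swap (by fun_prop), ← lintegral_mul_const'' _ hf]
  refine lintegral_congr fun y => ?_
  rw [← lintegral_const_mul'' _ hg]
  exact lintegral_add_left_eq_self (fun x => f y * g x) (-y)

theorem exp_mul_lconvolution (σ : ℝ) (f g : ℝ → ℝ≥0∞) (x : ℝ) :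
    ENNReal.ofReal (exp (-(σ * x))) * (f ⋆ₗ g) x =
      ((fun y => ENNReal.ofReal (exp (-(σ * y))) * f y) ⋆ₗ
        fun y => ENNReal.ofReal (exp (-(σ * y))) * g y) x := by
  simp only [lconvolution_def]
  rw [← lintegral_const_mul' _ _ ENNReal.ofReal_ne_top]
  refine lintegral_congr fun y => ?_
  have : exp (-(σ * x)) = exp (-(σ * y)) * exp (-(σ * (-y + x))) := by
    rw [← exp_add]; ring_nf
  rw [this, ENNReal.ofReal_mul (exp_pos _).le]
  ring

noncomputable def abelKernel (α : ℝ) : ℝ → ℝ≥0∞ :=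
  (Ioi 0).indicator fun r => ENNReal.ofReal (r ^ (α - 1))

theorem measurable_abelKernel (α : ℝ) : Measurable (abelKernel α) :=
  (by fun_prop : Measurable fun r : ℝ => ENNReal.ofReal (r ^ (α - 1))).indicator
    measurableSet_Ioi

theorem lintegral_exp_mul_abelKernel {α σ : ℝ} (hα : 0 < α) (hσ : 0 < σ) :
    ∫⁻ r, ENNReal.ofReal (exp (-(σ * r))) * abelKernel α r =
      ENNReal.ofReal (Gamma α / σ ^ α) := by
  have hGamma := integral_rpow_mul_exp_neg_mul_Ioi hα hσ
  have hint : IntegrableOn (fun r => r ^ (α - 1) * exp (-(σ * r))) (Ioi 0) :=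
    .of_integral_ne_zero (by rw [hGamma]; positivity)
  simp only [abelKernel, ← indicator_mul_right _ fun r => ENNReal.ofReal (exp (-(σ * r)))]
  rw [lintegral_indicator measurableSet_Ioi]
  calc ∫⁻ r in Ioi 0, ENNReal.ofReal (exp (-(σ * r))) * ENNReal.ofReal (r ^ (α - 1))
      = ∫⁻ r in Ioi 0, ENNReal.ofReal (r ^ (α - 1) * exp (-(σ * r))) := by
        refine setLIntegral_congr_fun measurableSet_Ioi fun r hr => ?_
        rw [ENNReal.ofReal_mul (rpow_nonneg hr.le _), mul_comm]
    _ = ENNReal.ofReal (Gamma α / σ ^ α) := by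
        rw [← ofReal_integral_eq_lintegral_ofReal hint, hGamma, div_rpow zero_le_one hσ.le,
          one_rpow, div_mul_eq_mul_div, one_mul]
        filter_upwards [ae_restrict_mem measurableSet_Ioi] with r hr
        exact mul_nonneg (rpow_nonneg hr.le _) (exp_pos _).le

theorem lintegral_exp_mul_lconvolution_abelKernel {α σ : ℝ} (hα : 0 < α) (hσ : 0 < σ)
    {w : ℝ → ℝ≥0∞} (hw : AEMeasurable w) :
    ∫⁻ x, ENNReal.ofReal (exp (-(σ * x))) * (w ⋆ₗ abelKernel α) x =
      (∫⁻ x, ENNReal.ofReal (exp (-(σ * x))) * w x) * ENNReal.ofReal (Gamma α / σ ^ α) := by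
  have he : Measurable fun x : ℝ => ENNReal.ofReal (exp (-(σ * x))) := by fun_prop
  simp_rw [exp_mul_lconvolution]
  rw [lintegral_lconvolution (f := fun x => ENNReal.ofReal (exp (-(σ * x))) * w x)
    (g := fun x => ENNReal.ofReal (exp (-(σ * x))) * abelKernel α x)
    (he.aemeasurable.mul hw) (he.mul (measurable_abelKernel α)).aemeasurable,
    lintegral_exp_mul_abelKernel hα hσ]

theorem setLIntegral_Ioo_le_lconvolution_abelKernel {α t T : ℝ} (htT : t ≤ T)
    (v : ℝ → ℝ≥0∞) :
    ∫⁻ s in Ioo 0 t, ENNReal.ofReal ((t - s) ^ (α - 1)) * v s ≤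
      ((Ioo 0 T).indicator v ⋆ₗ abelKernel α) t := by
  rw [lconvolution_def]
  calc ∫⁻ s in Ioo 0 t, ENNReal.ofReal ((t - s) ^ (α - 1)) * v s
      = ∫⁻ s in Ioo 0 t, (Ioo 0 T).indicator v s * abelKernel α (-s + t) := by
        refine setLIntegral_congr_fun measurableSet_Ioo fun s hs => ?_
        have hts : -s + t ∈ Ioi 0 := by rw [mem_Ioi]; linarith [hs.2]
        rw [indicator_of_mem (show s ∈ Ioo 0 T from ⟨hs.1, hs.2.trans_le htT⟩), abelKernel,
          indicator_of_mem hts, mul_comm, neg_add_eq_sub]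
    _ ≤ _ := setLIntegral_le_lintegral _ _

theorem ENNReal.eq_zero_of_le_mul_of_lt_one {a c : ℝ≥0∞} (h : a ≤ c * a) (hc : c < 1)
    (ha : a ≠ ∞) : a = 0 := by
  by_contra ha0
  have : c * a < 1 * a := (ENNReal.mul_lt_mul_iff_left ha0 ha).mpr hc
  exact (h.trans_lt this).ne (one_mul a).symm

theorem exists_pos_mul_ofReal_gamma_div_rpow_lt_one (C : ℝ≥0) {α : ℝ} (hα : 0 < α) :
    ∃ σ > 0, (C : ℝ≥0∞) * ENNReal.ofReal (Gamma α / σ ^ α) < 1 := by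
  have hlim : Tendsto (fun σ : ℝ => (C : ℝ≥0∞) * ENNReal.ofReal (Gamma α / σ ^ α))
      atTop (𝓝 0) := by
    have := tendsto_const_nhds (x := Gamma α) |>.div_atTop (tendsto_rpow_atTop hα)
    simpa using ENNReal.Tendsto.const_mul (ENNReal.tendsto_ofReal this)
      (Or.inr ENNReal.coe_ne_top)
  exact ((eventually_gt_atTop 0).and (hlim.eventually_lt_const zero_lt_one)).exists

theorem lintegral_exp_mul_indicator_le {σ T : ℝ} (hσ : 0 ≤ σ) (v : ℝ → ℝ≥0∞) :
    ∫⁻ x, ENNReal.ofReal (exp (-(σ * x))) * (Ioo 0 T).indicator v x ≤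
      ∫⁻ x in Ioo 0 T, v x := by
  rw [← lintegral_indicator measurableSet_Ioo]
  refine lintegral_mono fun x => ?_
  by_cases hx : x ∈ Ioo 0 T
  · rw [indicator_of_mem hx]
    exact mul_le_of_le_one_left' (ENNReal.ofReal_le_one.2
      (exp_le_one_iff.2 (neg_nonpos.2 (mul_nonneg hσ hx.1.le))))
  · simp [indicator_of_notMem hx]

theorem ae_eq_zero_of_le_mul_abel_integral {α T : ℝ} {C : ℝ≥0} {v : ℝ → ℝ≥0∞} (hα : 0 < α)
    (hv : AEMeasurable v (volume.restrict (Ioo 0 T))) (hv_fin : ∫⁻ t in Ioo 0 T, v t ≠ ∞)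
    (h : ∀ᵐ t ∂volume.restrict (Ioo 0 T),
      v t ≤ C * ∫⁻ s in Ioo 0 t, ENNReal.ofReal ((t - s) ^ (α - 1)) * v s) :
    ∀ᵐ t ∂volume.restrict (Ioo 0 T), v t = 0 := by
  obtain ⟨σ, hσ, hσC⟩ := exists_pos_mul_ofReal_gamma_div_rpow_lt_one C hα
  set w := (Ioo 0 T).indicator v
  have hw : AEMeasurable w := (aemeasurable_indicator_iff measurableSet_Ioo).2 hv
  have hconv : ∀ᵐ x, w x ≤ C * (w ⋆ₗ abelKernel α) x := by
    rw [ae_restrict_iff' measurableSet_Ioo] at h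
    filter_upwards [h] with x hx
    by_cases hxT : x ∈ Ioo 0 T
    · rw [show w x = v x from indicator_of_mem hxT v]
      grw [hx hxT, setLIntegral_Ioo_le_lconvolution_abelKernel hxT.2.le v]
    · simp [w, indicator_of_notMem hxT]
  have hW : ∫⁻ x, ENNReal.ofReal (exp (-(σ * x))) * w x ≤
      C * ENNReal.ofReal (Gamma α / σ ^ α) * ∫⁻ x, ENNReal.ofReal (exp (-(σ * x))) * w x :=
    calc ∫⁻ x, ENNReal.ofReal (exp (-(σ * x))) * w x
        ≤ ∫⁻ x, C * (ENNReal.ofReal (exp (-(σ * x))) * (w ⋆ₗ abelKernel α) x) :=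
          lintegral_mono_ae <| hconv.mono fun x hx => by grw [hx, mul_left_comm]
      _ = C * ((∫⁻ x, ENNReal.ofReal (exp (-(σ * x))) * w x) *
            ENNReal.ofReal (Gamma α / σ ^ α)) := by
          rw [lintegral_const_mul' _ _ ENNReal.coe_ne_top,
            lintegral_exp_mul_lconvolution_abelKernel hα hσ hw]
      _ = _ := by ring
  have hW0 := ENNReal.eq_zero_of_le_mul_of_lt_one hW hσC
    (ne_top_of_le_ne_top hv_fin (lintegral_exp_mul_indicator_le hσ.le v))
  rw [lintegral_eq_zero_iff' (by fun_prop)] at hW0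
  rw [ae_restrict_iff' measurableSet_Ioo]
  filter_upwards [hW0] with x hx hxT
  simpa [w, indicator_of_mem hxT, not_le.2 (exp_pos _)] using hx

theorem enorm_intervalIntegral_abel_le {α t : ℝ} (ht : 0 ≤ t) (f : ℝ → ℝ) :
    ‖∫ s in (0 : ℝ)..t, (t - s) ^ (α - 1) * f s‖ₑ ≤
      ∫⁻ s in Ioo 0 t, ENNReal.ofReal ((t - s) ^ (α - 1)) * ‖f s‖ₑ := by
  rw [intervalIntegral.integral_of_le ht, setLIntegral_congr Ioo_ae_eq_Ioc]
  refine (enorm_integral_le_lintegral_enorm _).trans_eq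
    (setLIntegral_congr_fun measurableSet_Ioc fun s hs => ?_)
  rw [enorm_mul, Real.enorm_of_nonneg (rpow_nonneg (sub_nonneg.2 hs.2) _)]

theorem uniqueness_via_generalized_Gronwall_general
    (T α lam : ℝ) (hα : 0 < α)
    (u : ℝ → ℝ) (hu : MemLp u 2 (volume.restrict (Set.Ioo 0 T)))
    (heq : ∀ᵐ t ∂(volume.restrict (Set.Ioo 0 T)),
      u t = -(lam / Real.Gamma α) * ∫ s in (0:ℝ)..t, (t - s) ^ (α - 1) * u s) :
    ∀ᵐ t ∂(volume.restrict (Set.Ioo 0 T)), u t = 0 := by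
  have hle : ∀ᵐ t ∂volume.restrict (Ioo 0 T), ‖u t‖ₑ ≤
      ‖lam / Gamma α‖₊ * ∫⁻ s in Ioo 0 t, ENNReal.ofReal ((t - s) ^ (α - 1)) * ‖u s‖ₑ := by
    filter_upwards [heq, ae_restrict_mem measurableSet_Ioo] with t ht htT
    rw [ht, enorm_mul, enorm_neg]
    grw [enorm_intervalIntegral_abel_le htT.1.le u]
    rfl
  have hu_fin : ∫⁻ t in Ioo 0 T, ‖u t‖ₑ ≠ ∞ :=
    (hu.integrable one_le_two).hasFiniteIntegral.ne
  filter_upwards [ae_eq_zero_of_le_mul_abel_integral hα hu.aestronglyMeasurable.enorm hu_fin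
    hle] with t ht
  exact enorm_eq_zero.1 ht

theorem uniqueness_via_generalized_Gronwall
    (T α lam : ℝ) (hT : 0 < T) (hα : 0 < α) (hα1 : α < 1)
    (u : ℝ → ℝ) (hu : MemLp u 2 (volume.restrict (Set.Ioo 0 T)))
    (heq : ∀ᵐ t ∂(volume.restrict (Set.Ioo 0 T)),
      u t = -(lam / Real.Gamma α) * ∫ s in (0:ℝ)..t, (t - s) ^ (α - 1) * u s) :
    ∀ᵐ t ∂(volume.restrict (Set.Ioo 0 T)), u t = 0 :=
  uniqueness_via_generalized_Gronwall_general T α lam hα u hu heq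
end

section
/- Fractional integral of the shifted Mittag-Leffler kernel: for 0 < α < 1, λ ∈ ℝ, λ ≠ 0, 0 < t₀ < T, and u(t) := 0 for t ≤ t₀, u(t) := (t−t₀)^{α−1} E_{α,α}(−λ(t−t₀)^α) for t > t₀, one has −λ (J^α u)(t) = (t−t₀)^{α−1} E_{α,α}(−λ(t−t₀)^α) − (t−t₀)^{α−1}/Γ(α) for t > t₀, and (J^α u)(t) = 0 for t ≤ t₀. -/
/-!
Expanding `E_{α,β}` into its power series and integrating each term against `(t - s)^(α-1)`
with the Beta integral gives the classical formula
`J^α[(s - t₀)^(β-1) E_{α,β}(z (s - t₀)^α)](t) = (t - t₀)^(α+β-1) E_{α,α+β}(z (t - t₀)^α)`.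
Summing and integrating may be interchanged because the series of absolute values is again a
Mittag-Leffler series; for `0 < α < 1` its convergence follows from the ratio test and the
log-convexity bound `x^α Γ(x) ≤ 2 Γ(x + α)`. For `β = α` the recursion
`E_{α,α}(z) = 1/Γ(α) + z E_{α,2α}(z)` turns the formula into the claim.
-/

open MeasureTheory Real Set Filter

/-- Riemann–Liouville fractional integral. -/
noncomputable def J (α : ℝ) (v : ℝ → ℝ) (t : ℝ) : ℝ :=
  (1 / Real.Gamma α) * ∫ s in (0:ℝ)..t, (t - s) ^ (α - 1) * v s

namespace Real

theorem mul_Gamma_le_Gamma_add_mul_rpow {α x : ℝ} (hα : 0 < α) (hα1 : α < 1) (hx : 0 < x) :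
    x * Gamma x ≤ Gamma (x + α) * (x + α) ^ (1 - α) := by
  have hG : 0 < Gamma (x + α) := Gamma_pos_of_pos (by linarith)
  -- log-convexity of `Gamma` between `x + α` and `x + α + 1`, evaluated at `x + 1`
  have h := Gamma_mul_add_mul_le_rpow_Gamma_mul_rpow_Gamma (s := x + α) (t := x + α + 1)
    (a := α) (b := 1 - α) (by linarith) (by linarith) hα (by linarith) (by ring)
  rw [show α * (x + α) + (1 - α) * (x + α + 1) = x + 1 by ring, Gamma_add_one hx.ne',
    Gamma_add_one (by positivity), mul_rpow (by positivity) hG.le, mul_left_comm,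
    ← rpow_add hG, show α + (1 - α) = 1 by ring, rpow_one] at h
  rwa [mul_comm (Gamma (x + α))]

theorem rpow_mul_Gamma_le_two_mul_Gamma_add {α x : ℝ} (hα : 0 < α) (hα1 : α < 1)
    (hx : α ≤ x) : x ^ α * Gamma x ≤ 2 * Gamma (x + α) := by
  have hx0 : 0 < x := hα.trans_le hx
  have hG : 0 < Gamma (x + α) := Gamma_pos_of_pos (by linarith)
  have hpow : (x + α) ^ (1 - α) ≤ 2 * x ^ (1 - α) :=
    calc (x + α) ^ (1 - α) ≤ (2 * x) ^ (1 - α) := by gcongr; linarith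
      _ = 2 ^ (1 - α) * x ^ (1 - α) := mul_rpow (by norm_num) hx0.le
      _ ≤ 2 ^ (1 : ℝ) * x ^ (1 - α) := by gcongr; norm_num; linarith
      _ = 2 * x ^ (1 - α) := by rw [rpow_one]
  have hsplit : x ^ α * x ^ (1 - α) = x := by rw [← rpow_add hx0]; norm_num
  have hpos : 0 < x ^ (1 - α) := rpow_pos_of_pos hx0 _
  refine le_of_mul_le_mul_right ?_ hpos
  calc x ^ α * Gamma x * x ^ (1 - α) = x * Gamma x := by rw [mul_right_comm, hsplit]
    _ ≤ Gamma (x + α) * (x + α) ^ (1 - α) := mul_Gamma_le_Gamma_add_mul_rpow hα hα1 hx0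
    _ ≤ Gamma (x + α) * (2 * x ^ (1 - α)) := by gcongr
    _ = 2 * Gamma (x + α) * x ^ (1 - α) := by ring

theorem summable_pow_div_Gamma {α : ℝ} (hα : 0 < α) (hα1 : α < 1) (β z : ℝ) :
    Summable fun k : ℕ => z ^ k / Gamma (α * k + β) := by
  have hx : Tendsto (fun k : ℕ => α * k + β) atTop atTop :=
    tendsto_atTop_add_const_right _ β (tendsto_natCast_atTop_atTop.const_mul_atTop hα)
  have hxα : Tendsto (fun k : ℕ => (α * k + β) ^ α) atTop atTop :=
    (tendsto_rpow_atTop hα).comp hx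
  refine summable_of_ratio_norm_eventually_le (r := 1 / 2) (by norm_num) ?_
  filter_upwards [hx.eventually_ge_atTop α, hxα.eventually_ge_atTop (4 * |z|)] with k hk hkz
  have hΓ : 0 < Gamma (α * k + β) := Gamma_pos_of_pos (hα.trans_le hk)
  have hΓ' : 0 < Gamma (α * k + β + α) := Gamma_pos_of_pos (by linarith)
  have hkey := rpow_mul_Gamma_le_two_mul_Gamma_add hα hα1 hk
  have hratio : |z| ≤ 1 / 2 * (Gamma (α * k + β + α) / Gamma (α * k + β)) := by
    rw [← mul_div_assoc, le_div_iff₀ hΓ]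
    nlinarith [mul_le_mul_of_nonneg_right hkz hΓ.le]
  rw [Nat.cast_succ, show α * (k + 1 : ℝ) + β = α * k + β + α by ring, norm_div, norm_div,
    norm_pow, norm_pow, pow_succ, Real.norm_eq_abs, Real.norm_of_nonneg hΓ.le,
    Real.norm_of_nonneg hΓ'.le, div_le_iff₀ hΓ']
  calc |z| ^ k * |z| ≤ |z| ^ k * (1 / 2 * (Gamma (α * k + β + α) / Gamma (α * k + β))) := by
        gcongr
    _ = 1 / 2 * (|z| ^ k / Gamma (α * k + β)) * Gamma (α * k + β + α) := by ring

theorem integral_rpow_mul_one_sub_rpow {p q : ℝ} (hp : 0 < p) (hq : 0 < q) :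
    ∫ x in (0 : ℝ)..1, x ^ (p - 1) * (1 - x) ^ (q - 1) = Gamma p * Gamma q / Gamma (p + q) := by
  have hbeta : Complex.betaIntegral p q
      = ((∫ x in (0 : ℝ)..1, x ^ (p - 1) * (1 - x) ^ (q - 1) : ℝ) : ℂ) := by
    rw [Complex.betaIntegral, ← intervalIntegral.integral_ofReal]
    refine intervalIntegral.integral_congr fun x hx => ?_
    rw [uIcc_of_le zero_le_one] at hx
    simp only [Complex.ofReal_mul]
    rw [Complex.ofReal_cpow hx.1, Complex.ofReal_cpow (by linarith [hx.2])]
    push_cast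
    ring
  have h := Complex.Gamma_mul_Gamma_eq_betaIntegral (s := p) (t := q) (by simpa) (by simpa)
  rw [hbeta, ← Complex.ofReal_add, Complex.Gamma_ofReal, Complex.Gamma_ofReal,
    Complex.Gamma_ofReal, ← Complex.ofReal_mul, ← Complex.ofReal_mul, Complex.ofReal_inj] at h
  rw [h, mul_div_cancel_left₀ _ (Gamma_pos_of_pos (add_pos hp hq)).ne']

end Real

theorem ML_eq_inv_Gamma_add_mul_ML {α : ℝ} (hα : 0 < α) (hα1 : α < 1) (β z : ℝ) :
    ML α β z = 1 / Gamma β + z * ML α (α + β) z := by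
  rw [ML, (summable_pow_div_Gamma hα hα1 β z).tsum_eq_zero_add, ML, ← tsum_mul_left]
  congr 1
  · simp
  · refine tsum_congr fun k => ?_
    rw [Nat.cast_succ, pow_succ]
    ring_nf

theorem rpow_mul_pow_eq_pow_mul_rpow {x : ℝ} (hx : 0 < x) (α γ z : ℝ) (k : ℕ) :
    x ^ γ * (z * x ^ α) ^ k = z ^ k * x ^ (α * k + γ) := by
  rw [mul_pow, ← rpow_natCast (x ^ α), ← rpow_mul hx.le, rpow_add hx]
  ring

theorem rpow_mul_ML_eq_tsum (α β γ z : ℝ) {x : ℝ} (hx : 0 < x) :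
    x ^ γ * ML α β (z * x ^ α) = ∑' k : ℕ, z ^ k / Gamma (α * k + β) * x ^ (α * k + γ) := by
  rw [ML, ← tsum_mul_left]
  refine tsum_congr fun k => ?_
  rw [← mul_div_assoc, rpow_mul_pow_eq_pow_mul_rpow hx]
  ring

theorem intervalIntegrable_sub_rpow_mul_sub_rpow {p q a b : ℝ} (hp : 0 < p) (hq : 0 < q)
    (hab : a < b) :
    IntervalIntegrable (fun s => (b - s) ^ (p - 1) * (s - a) ^ (q - 1)) volume a b := by
  -- split at the midpoint so that only one factor is singular on each half
  set m := (a + b) / 2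
  have ham : a < m := by simp only [m]; linarith
  have hmb : m < b := by simp only [m]; linarith
  refine IntervalIntegrable.trans (b := m) ?_ ?_
  · have hsing : IntervalIntegrable (fun s => (s - a) ^ (q - 1)) volume a m := by
      simpa using (intervalIntegral.intervalIntegrable_rpow' (a := 0) (b := m - a)
        (r := q - 1) (by linarith)).comp_sub_right a
    refine hsing.continuousOn_mul ((continuous_const.sub continuous_id).continuousOn.rpow_const
      fun s hs => Or.inl (sub_pos.mpr ?_).ne')
    rw [uIcc_of_le ham.le] at hs
    exact hs.2.trans_lt hmb
  · have hsing : IntervalIntegrable (fun s => (b - s) ^ (p - 1)) volume m b := by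
      simpa using ((intervalIntegral.intervalIntegrable_rpow' (a := 0) (b := b - m)
        (r := p - 1) (by linarith)).comp_sub_left b).symm
    refine hsing.mul_continuousOn ((continuous_id.sub continuous_const).continuousOn.rpow_const
      fun s hs => Or.inl (sub_pos.mpr ?_).ne')
    rw [uIcc_of_le hmb.le] at hs
    exact ham.trans_le hs.1

theorem integral_sub_rpow_mul_sub_rpow {p q a b : ℝ} (hp : 0 < p) (hq : 0 < q) (hab : a < b) :
    ∫ s in a..b, (b - s) ^ (p - 1) * (s - a) ^ (q - 1)
      = Gamma p * Gamma q / Gamma (p + q) * (b - a) ^ (p + q - 1) := by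
  obtain ⟨c, rfl⟩ : ∃ c, b = a + c := ⟨b - a, by ring⟩
  have hc : 0 < c := by linarith
  have hshift : ∫ s in a..a + c, (a + c - s) ^ (p - 1) * (s - a) ^ (q - 1)
      = ∫ x in (0 : ℝ)..c, (c - x) ^ (p - 1) * x ^ (q - 1) := by
    have h := intervalIntegral.integral_comp_add_left
      (fun s => (a + c - s) ^ (p - 1) * (s - a) ^ (q - 1)) a (a := 0) (b := c)
    simp only [add_zero, add_sub_add_left_eq_sub, add_sub_cancel_left] at h
    exact h.symm
  have hscale : ∫ x in (0 : ℝ)..c, (c - x) ^ (p - 1) * x ^ (q - 1)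
      = c * ∫ x in (0 : ℝ)..1, (c - c * x) ^ (p - 1) * (c * x) ^ (q - 1) := by
    rw [intervalIntegral.integral_comp_mul_left (fun y => (c - y) ^ (p - 1) * y ^ (q - 1))
      hc.ne', mul_zero, mul_one, smul_eq_mul, mul_inv_cancel_left₀ hc.ne']
  have hfactor : ∫ x in (0 : ℝ)..1, (c - c * x) ^ (p - 1) * (c * x) ^ (q - 1)
      = c ^ (p - 1) * c ^ (q - 1) * ∫ x in (0 : ℝ)..1, x ^ (q - 1) * (1 - x) ^ (p - 1) := by
    rw [← intervalIntegral.integral_const_mul]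
    refine intervalIntegral.integral_congr fun x hx => ?_
    rw [uIcc_of_le zero_le_one] at hx
    rw [← mul_one_sub, mul_rpow hc.le (by linarith [hx.2]), mul_rpow hc.le hx.1]
    ring
  have hpow : c * (c ^ (p - 1) * c ^ (q - 1)) = c ^ (p + q - 1) := by
    rw [← rpow_add hc, mul_comm, ← rpow_add_one hc.ne']
    ring_nf
  rw [hshift, hscale, hfactor, integral_rpow_mul_one_sub_rpow hq hp, add_sub_cancel_left, ← hpow,
    add_comm q, mul_comm (Gamma q)]
  ring

theorem intervalIntegral.integral_eq_of_forall_mem_Ioc_eq_zero {E : Type*}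
    [NormedAddCommGroup E] [NormedSpace ℝ E] {f : ℝ → E} {a b c : ℝ} (hab : a ≤ b)
    (hbc : b ≤ c) (hf : ∀ x ∈ Ioc a b, f x = 0) :
    ∫ x in a..c, f x = ∫ x in b..c, f x := by
  rw [intervalIntegral.integral_of_le (hab.trans hbc), intervalIntegral.integral_of_le hbc]
  exact setIntegral_eq_of_subset_of_forall_sdiff_eq_zero measurableSet_Ioc
    (Ioc_subset_Ioc_left hab) fun x hx => hf x ⟨hx.1.1, not_lt.mp fun h => hx.2 ⟨h, hx.1.2⟩⟩

theorem integral_sub_rpow_mul_rpow_mul_ML {α β : ℝ} (hα : 0 < α) (hα1 : α < 1) (hβ : 0 < β)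
    (z : ℝ) {a b : ℝ} (hab : a < b) :
    ∫ s in a..b, (b - s) ^ (α - 1) * ((s - a) ^ (β - 1) * ML α β (z * (s - a) ^ α))
      = Gamma α * ((b - a) ^ (α + β - 1) * ML α (α + β) (z * (b - a) ^ α)) := by
  set F : ℝ → ℕ → ℝ → ℝ := fun w k s =>
    w ^ k / Gamma (α * k + β) * ((b - s) ^ (α - 1) * (s - a) ^ (α * k + (β - 1)))
  have hq : ∀ k : ℕ, 0 < α * k + β := fun k => by positivity
  have hF_int : ∀ w k, Integrable (F w k) (volume.restrict (Ioc a b)) := fun w k => by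
    have h := intervalIntegrable_sub_rpow_mul_sub_rpow hα (hq k) hab
    rw [add_sub_assoc] at h
    exact ((intervalIntegrable_iff_integrableOn_Ioc_of_le hab.le).mp h).const_mul _
  have hF_integral : ∀ w k, ∫ s in Ioc a b, F w k s
      = Gamma α * (w ^ k / Gamma (α * k + (α + β)) * (b - a) ^ (α * k + (α + β - 1))) := by
    intro w k
    have hΓ := (Gamma_pos_of_pos (hq k)).ne'
    simp only [F, ← add_sub_assoc]
    rw [integral_const_mul, ← intervalIntegral.integral_of_le hab.le,
      integral_sub_rpow_mul_sub_rpow hα (hq k) hab]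
    field_simp
    ring_nf
  have hF_norm : ∀ k, ∫ s in Ioc a b, ‖F z k s‖ = ∫ s in Ioc a b, F |z| k s := by
    refine fun k => setIntegral_congr_fun measurableSet_Ioc fun s hs => ?_
    have hs₁ : 0 ≤ b - s := sub_nonneg.mpr hs.2
    have hs₂ : 0 ≤ s - a := (sub_pos.mpr hs.1).le
    simp only [F, norm_mul, norm_div, norm_pow, Real.norm_eq_abs,
      abs_of_pos (Gamma_pos_of_pos (hq k)), abs_of_nonneg (rpow_nonneg hs₁ _),
      abs_of_nonneg (rpow_nonneg hs₂ _)]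
  have hc : 0 < b - a := sub_pos.mpr hab
  have hsummable : Summable fun k => ∫ s in Ioc a b, ‖F z k s‖ := by
    refine ((summable_pow_div_Gamma hα hα1 (α + β) (|z| * (b - a) ^ α)).mul_left
      (Gamma α * (b - a) ^ (α + β - 1))).congr fun k => ?_
    rw [hF_norm, hF_integral, mul_assoc, ← mul_div_assoc,
      rpow_mul_pow_eq_pow_mul_rpow hc]
    ring
  have hseries : ∀ s ∈ Ioc a b,
      (b - s) ^ (α - 1) * ((s - a) ^ (β - 1) * ML α β (z * (s - a) ^ α)) = ∑' k, F z k s := by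
    intro s hs
    rw [rpow_mul_ML_eq_tsum α β (β - 1) z (sub_pos.mpr hs.1), ← tsum_mul_left]
    exact tsum_congr fun k => by ring
  rw [intervalIntegral.integral_of_le hab.le, setIntegral_congr_fun measurableSet_Ioc hseries,
    ← integral_tsum_of_summable_integral_norm (hF_int z) hsummable, tsum_congr (hF_integral z),
    tsum_mul_left, rpow_mul_ML_eq_tsum α (α + β) (α + β - 1) z hc]

theorem fractional_integral_shifted_MittagLeffler_kernel_general
    (α lam t₀ : ℝ) (hα : 0 < α) (hα1 : α < 1)
    (ht₀ : 0 < t₀)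
    (u : ℝ → ℝ)
    (hu : ∀ t : ℝ, u t = if t ≤ t₀ then 0
      else (t - t₀) ^ (α - 1) * ML α α (-lam * (t - t₀) ^ α)) :
    (∀ t : ℝ, t₀ < t →
      -lam * J α u t =
        (t - t₀) ^ (α - 1) * ML α α (-lam * (t - t₀) ^ α) -
          (t - t₀) ^ (α - 1) / Real.Gamma α) ∧
    (∀ t : ℝ, t ≤ t₀ → J α u t = 0) := by
  have hzero : ∀ s ≤ t₀, u s = 0 := fun s hs => by rw [hu, if_pos hs]
  refine ⟨fun t ht => ?_, fun t ht => ?_⟩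
  · have hJ : J α u t = (t - t₀) ^ (α + α - 1) * ML α (α + α) (-lam * (t - t₀) ^ α) := by
      have hu_Ioc : ∀ᵐ s, s ∈ uIoc t₀ t → (t - s) ^ (α - 1) * u s
          = (t - s) ^ (α - 1) * ((s - t₀) ^ (α - 1) * ML α α (-lam * (s - t₀) ^ α)) :=
        Eventually.of_forall fun s hs => by
          rw [uIoc_of_le ht.le] at hs
          rw [hu, if_neg (not_le.mpr hs.1)]
      rw [J, intervalIntegral.integral_eq_of_forall_mem_Ioc_eq_zero ht₀.le ht.le
          fun s hs => by rw [hzero s hs.2, mul_zero],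
        intervalIntegral.integral_congr_ae hu_Ioc,
        integral_sub_rpow_mul_rpow_mul_ML hα hα1 hα (-lam) ht, ← mul_assoc,
        one_div_mul_cancel (Gamma_pos_of_pos hα).ne', one_mul]
    rw [hJ, ML_eq_inv_Gamma_add_mul_ML hα hα1 α, show α + α - 1 = (α - 1) + α by ring,
      rpow_add (sub_pos.mpr ht)]
    ring
  · have hvanish : EqOn (fun s => (t - s) ^ (α - 1) * u s) 0 (uIcc 0 t) := fun s hs => by
      dsimp only
      rw [Pi.zero_apply, hzero s ((mem_uIcc.mp hs).elim (fun h => by linarith [h.2])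
        fun h => by linarith [h.2]), mul_zero]
    rw [J, intervalIntegral.integral_congr hvanish, Pi.zero_def,
      intervalIntegral.integral_zero, mul_zero]

theorem fractional_integral_shifted_MittagLeffler_kernel
    (T α lam t₀ : ℝ) (hα : 0 < α) (hα1 : α < 1) (hlam : lam ≠ 0)
    (ht₀ : 0 < t₀) (ht₀T : t₀ < T)
    (u : ℝ → ℝ)
    (hu : ∀ t : ℝ, u t = if t ≤ t₀ then 0
      else (t - t₀) ^ (α - 1) * ML α α (-lam * (t - t₀) ^ α)) :
    (∀ t : ℝ, t₀ < t →
      -lam * J α u t =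
        (t - t₀) ^ (α - 1) * ML α α (-lam * (t - t₀) ^ α) -
          (t - t₀) ^ (α - 1) / Real.Gamma α) ∧
    (∀ t : ℝ, t ≤ t₀ → J α u t = 0) :=
  fractional_integral_shifted_MittagLeffler_kernel_general α lam t₀ hα hα1 ht₀ u hu
end
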